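/- Let d ≥ 1, and let Ũ ∈ ℂ^{N×d} and V_1,…,V_{K−1} ∈ ℂ^{M×d} be truncated unitary (Ũ^H Ũ = I_d, V_j^H V_j = I_d). For each j let H_j, Ĥ_j ∈ ℂ^{N×M} with H_j ≠ 0, ‖Ĥ_j‖_F = 1, and suppose the alignment equations Ũ^H Ĥ_j V_j = 0 hold for all j. Set z_j = vec(H_j)/‖H_j‖_F, ẑ_j = vec(Ĥ_j), and B_max = max_j ‖H_j‖_F². Then for every P > 0 the interference leakage satisfies (P/d)·Σ_{j=1}^{K−1} ‖Ũ^H H_j V_j‖_F² ≤ 2·P·d·B_max·Σ_{j=1}^{K−1} (1 − |ẑ_j^H z_j|²). -/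

import Mathlib

open Matrix

/-- Squared Frobenius norm of a complex matrix. -/
noncomputable def frobNormSq {m n : Type*} [Fintype m] [Fintype n]
    (A : Matrix m n ℂ) : ℝ :=
  ∑ i, ∑ j, ‖A i j‖ ^ 2

/-- Frobenius norm of a complex matrix. -/
noncomputable def frobNorm {m n : Type*} [Fintype m] [Fintype n]
    (A : Matrix m n ℂ) : ℝ :=
  Real.sqrt (frobNormSq A)

/-- Frobenius (entrywise) Hermitian inner product `⟨A, B⟩ = ∑ᵢⱼ conj(Aᵢⱼ) Bᵢⱼ`,
i.e. `vec(A)ᴴ vec(B)`. -/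
noncomputable def matInner {m n : Type*} [Fintype m] [Fintype n]
    (A B : Matrix m n ℂ) : ℂ :=
  ∑ i, ∑ j, star (A i j) * B i j

/-!
Write `H = γ • Ĥ + R` with `γ = ⟨Ĥ, H⟩`. The alignment equation kills `Ũᴴ Ĥ V`, so the leakage
`Ũᴴ H V` equals `Ũᴴ R V`, whose Frobenius norm is at most `‖Ũ‖_F ‖R‖_F ‖V‖_F = d ‖R‖_F`.
By Pythagoras `‖R‖_F² = ‖H‖_F² - |γ|² = ‖H‖_F² (1 - |ẑᴴ z|²) ≤ B_max (1 - |ẑᴴ z|²)`, and summing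
over the channels gives the bound, even without the factor `2`.
-/

open scoped Matrix.Norms.Frobenius InnerProductSpace

theorem norm_sub_inner_smul_sq {𝕜 E : Type*} [RCLike 𝕜] [NormedAddCommGroup E]
    [InnerProductSpace 𝕜 E] {u : E} (hu : ‖u‖ = 1) (x : E) :
    ‖x - ⟪u, x⟫_𝕜 • u‖ ^ 2 = ‖x‖ ^ 2 - ‖⟪u, x⟫_𝕜‖ ^ 2 := by
  have horth : ⟪x - ⟪u, x⟫_𝕜 • u, ⟪u, x⟫_𝕜 • u⟫_𝕜 = 0 := by
    simp [inner_sub_left, inner_smul_left, inner_smul_right, inner_self_eq_norm_sq_to_K, hu]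
  have hpyth := norm_add_sq_eq_norm_sq_add_norm_sq_of_inner_eq_zero _ _ horth
  rw [sub_add_cancel, norm_smul, hu, mul_one] at hpyth
  linarith

namespace Matrix

variable {l m n p : Type*}

/-- `vec A`, realised so that its Euclidean norm is by definition the Frobenius norm of `A`. -/
def toFrobeniusLp (A : Matrix m n ℂ) : PiLp 2 fun _ : m => EuclideanSpace ℂ n :=
  WithLp.toLp 2 fun i => WithLp.toLp 2 (A i)

theorem toFrobeniusLp_sub_smul (A B : Matrix m n ℂ) (c : ℂ) :
    toFrobeniusLp (A - c • B) = toFrobeniusLp A - c • toFrobeniusLp B := rfl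

variable [Fintype l] [Fintype m] [Fintype n] [Fintype p]

theorem norm_toFrobeniusLp (A : Matrix m n ℂ) : ‖toFrobeniusLp A‖ = ‖A‖ := rfl

theorem inner_toFrobeniusLp (A B : Matrix m n ℂ) :
    ⟪toFrobeniusLp A, toFrobeniusLp B⟫_ℂ = matInner A B := by
  simp [toFrobeniusLp, matInner, PiLp.inner_apply, mul_comm]

theorem frobNormSq_eq_norm_sq (A : Matrix m n ℂ) : frobNormSq A = ‖A‖ ^ 2 := by
  rw [← norm_toFrobeniusLp, toFrobeniusLp, PiLp.norm_sq_eq_of_L2]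
  simp [frobNormSq, PiLp.norm_sq_eq_of_L2]

theorem frobNorm_eq_norm (A : Matrix m n ℂ) : frobNorm A = ‖A‖ := by
  rw [frobNorm, frobNormSq_eq_norm_sq, Real.sqrt_sq (norm_nonneg A)]

theorem frobNormSq_nonneg (A : Matrix m n ℂ) : 0 ≤ frobNormSq A :=
  frobNormSq_eq_norm_sq A ▸ sq_nonneg _

theorem trace_conjTranspose_mul (A B : Matrix m n ℂ) : (Aᴴ * B).trace = matInner A B := by
  rw [matInner, Finset.sum_comm]
  simp [trace, mul_apply]

theorem norm_sq_of_conjTranspose_mul_self_eq_one [DecidableEq n] {A : Matrix m n ℂ}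
    (hA : Aᴴ * A = 1) : ‖A‖ ^ 2 = Fintype.card n := by
  have htrace := congrArg Complex.re (trace_conjTranspose_mul A A)
  rw [hA, trace_one, ← inner_toFrobeniusLp, inner_self_eq_norm_sq_to_K,
    norm_toFrobeniusLp] at htrace
  exact_mod_cast htrace.symm

theorem frobNormSq_conjTranspose_mul_mul_le [DecidableEq n] [DecidableEq p] {U : Matrix l n ℂ}
    {V : Matrix m p ℂ} (hU : Uᴴ * U = 1) (hV : Vᴴ * V = 1) (X : Matrix l m ℂ) :
    frobNormSq (Uᴴ * X * V) ≤ Fintype.card n * frobNormSq X * Fintype.card p := by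
  have hmul : ‖Uᴴ * X * V‖ ≤ ‖U‖ * ‖X‖ * ‖V‖ := calc
    ‖Uᴴ * X * V‖ ≤ ‖Uᴴ‖ * ‖X‖ * ‖V‖ :=
      (frobenius_norm_mul _ _).trans (by gcongr; exact frobenius_norm_mul _ _)
    _ = ‖U‖ * ‖X‖ * ‖V‖ := by rw [frobenius_norm_conjTranspose]
  rw [frobNormSq_eq_norm_sq, frobNormSq_eq_norm_sq, ← norm_sq_of_conjTranspose_mul_self_eq_one hU,
    ← norm_sq_of_conjTranspose_mul_self_eq_one hV, ← mul_pow, ← mul_pow]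
  gcongr

theorem norm_matInner_le {B : Matrix m n ℂ} (hB : frobNorm B = 1) (A : Matrix m n ℂ) :
    ‖matInner B A‖ ≤ frobNorm A := by
  rw [frobNorm_eq_norm, ← norm_toFrobeniusLp] at hB ⊢
  simpa [← inner_toFrobeniusLp, hB] using
    norm_inner_le_norm (𝕜 := ℂ) (toFrobeniusLp B) (toFrobeniusLp A)

theorem frobNormSq_sub_matInner_smul {B : Matrix m n ℂ} (hB : frobNorm B = 1)
    (A : Matrix m n ℂ) :
    frobNormSq (A - matInner B A • B) = frobNormSq A - ‖matInner B A‖ ^ 2 := by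
  rw [frobNorm_eq_norm, ← norm_toFrobeniusLp] at hB
  simp only [frobNormSq_eq_norm_sq, ← norm_toFrobeniusLp, toFrobeniusLp_sub_smul,
    ← inner_toFrobeniusLp]
  exact norm_sub_inner_smul_sq hB _

/-- The squared chordal distance `1 - |ẑᴴ z|²` between `ẑ = vec B` and `z = vec A / ‖A‖_F`. -/
noncomputable def chordalDistSq (B A : Matrix m n ℂ) : ℝ :=
  1 - ‖matInner B A / (frobNorm A : ℂ)‖ ^ 2

theorem chordalDistSq_nonneg {B : Matrix m n ℂ} (hB : frobNorm B = 1) (A : Matrix m n ℂ) :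
    0 ≤ chordalDistSq B A := by
  have hA : 0 ≤ frobNorm A := Real.sqrt_nonneg _
  rw [chordalDistSq, sub_nonneg, norm_div, Complex.norm_real, Real.norm_of_nonneg hA]
  exact pow_le_one₀ (by positivity) (div_le_one_of_le₀ (norm_matInner_le hB A) hA)

theorem frobNormSq_mul_chordalDistSq {B : Matrix m n ℂ} (hB : frobNorm B = 1)
    (A : Matrix m n ℂ) :
    frobNormSq A * chordalDistSq B A = frobNormSq A - ‖matInner B A‖ ^ 2 := by
  have hγ := norm_matInner_le hB A
  rw [chordalDistSq, frobNormSq_eq_norm_sq, ← frobNorm_eq_norm]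
  rcases eq_or_ne (frobNorm A) 0 with hA | hA
  · simp [hA, norm_le_zero_iff.mp (hA ▸ hγ)]
  · rw [norm_div, Complex.norm_real, Real.norm_eq_abs, div_pow, sq_abs]
    field_simp

theorem frobNormSq_conjTranspose_mul_mul_le_chordalDistSq [DecidableEq n] [DecidableEq p]
    {U : Matrix l n ℂ} {V : Matrix m p ℂ} {B : Matrix l m ℂ} (hU : Uᴴ * U = 1) (hV : Vᴴ * V = 1)
    (hB : frobNorm B = 1) (hUBV : Uᴴ * B * V = 0) (A : Matrix l m ℂ) :
    frobNormSq (Uᴴ * A * V) ≤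
      Fintype.card n * (frobNormSq A * chordalDistSq B A) * Fintype.card p := by
  have hA : Uᴴ * A * V = Uᴴ * (A - matInner B A • B) * V := by
    rw [Matrix.mul_sub, Matrix.sub_mul, Matrix.mul_smul, Matrix.smul_mul, hUBV, smul_zero,
      sub_zero]
  rw [hA, frobNormSq_mul_chordalDistSq hB, ← frobNormSq_sub_matInner_smul hB]
  exact frobNormSq_conjTranspose_mul_mul_le hU hV _

end Matrix

theorem normalized_channel_quantization_leakage_bound
    (k N M d : ℕ)
    (U : Matrix (Fin N) (Fin d) ℂ) (hU : Uᴴ * U = 1)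
    (V : Fin k → Matrix (Fin M) (Fin d) ℂ) (hV : ∀ j, (V j)ᴴ * V j = 1)
    (H Hhat : Fin k → Matrix (Fin N) (Fin M) ℂ)
    (hHhat : ∀ j, frobNorm (Hhat j) = 1)
    (hIA : ∀ j, Uᴴ * Hhat j * V j = 0)
    (Bmax : ℝ) (hBmax : Bmax = ⨆ j, frobNormSq (H j))
    (P : ℝ) (hP : 0 < P) :
    (P / d) * ∑ j, frobNormSq (Uᴴ * H j * V j)
      ≤ 2 * P * d * Bmax *
        ∑ j, (1 - ‖matInner (Hhat j) (H j) / (frobNorm (H j) : ℂ)‖ ^ 2) := by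
  rw [Finset.mul_sum, Finset.mul_sum]
  refine Finset.sum_le_sum fun j _ => ?_
  change _ ≤ 2 * P * d * Bmax * chordalDistSq (Hhat j) (H j)
  have hleak := frobNormSq_conjTranspose_mul_mul_le_chordalDistSq hU (hV j) (hHhat j) (hIA j) (H j)
  rw [Fintype.card_fin] at hleak
  set c := chordalDistSq (Hhat j) (H j)
  have hc : 0 ≤ c := chordalDistSq_nonneg (hHhat j) (H j)
  have hHB : frobNormSq (H j) ≤ Bmax := by
    rw [hBmax]
    exact le_ciSup (f := fun j => frobNormSq (H j)) (Set.finite_range _).bddAbove j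
  have hB : 0 ≤ Bmax := (frobNormSq_nonneg _).trans hHB
  calc P / d * frobNormSq (Uᴴ * H j * V j) ≤ P / d * (d * (Bmax * c) * d) := by
        gcongr
        exact hleak.trans (by gcongr)
    _ = P * d * Bmax * c := by
      rcases eq_or_ne (d : ℝ) 0 with hd | hd
      · simp [hd]
      · field_simp
    _ ≤ 2 * P * d * Bmax * c := by linarith [show 0 ≤ P * d * Bmax * c by positivity]
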